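/- Let R = R_1 × ⋯ × R_s be a product of finite local rings, where R_i has maximal ideal of order m_i. Then for every integer k ≥ 1, the k-th spectral moment of the unitary Cayley graph G_R satisfies s_k(G_R) = |R^×| · Π_{i=1}^{s} (|R_i^×|^{k−1} − (−m_i)^{k−1}). -/

import Mathlib

open Polynomial

open Polynomial

/-- The unitary Cayley graph of a finite commutative ring `R`. -/
def unitaryCayley (R : Type*) [CommRing R] [Fintype R] [DecidableEq R] : SimpleGraph R where
  Adj x y := x ≠ y ∧ IsUnit (x - y)
  symm := ⟨by
    intro x y h
    exact ⟨h.1.symm, by simpa using h.2.neg⟩⟩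
  loopless := ⟨fun x h => h.1 rfl⟩

instance unitaryCayley.instDecidableRel (R : Type*) [CommRing R] [Fintype R] [DecidableEq R] :
    DecidableRel (unitaryCayley R).Adj := fun a b =>
  decidable_of_iff (a ≠ b ∧ ∃ c, (a - b) * c = 1)
    (and_congr Iff.rfl isUnit_iff_exists_inv.symm)

/-- An `r`-regular graph is Ramanujan if every adjacency eigenvalue other than `±r`
has absolute value at most `2 * sqrt (r - 1)`. -/
def IsRamanujan {V : Type*} [Fintype V] [DecidableEq V] (G : SimpleGraph V)
    [DecidableRel G.Adj] (r : ℕ) : Prop :=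
  ∀ μ ∈ (SimpleGraph.adjMatrix ℝ G).charpoly.roots,
    |μ| ≠ (r : ℝ) → |μ| ≤ 2 * Real.sqrt ((r : ℝ) - 1)

/-- The energy of a graph: the sum of absolute values of its adjacency eigenvalues. -/
noncomputable def graphEnergy {V : Type*} [Fintype V] [DecidableEq V] (G : SimpleGraph V)
    [DecidableRel G.Adj] : ℝ :=
  ((SimpleGraph.adjMatrix ℝ G).charpoly.roots.map (fun μ => |μ|)).sum

/-!
Every diagonal entry of the `k`-th power of the adjacency matrix of `G_R` is the number `N_k(R)`
of `k`-tuples of units of `R` summing to `0`, so `s_k(G_R) = |R| N_k(R)`, and both factors are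
multiplicative in `R`. Let `R` be local, with `u` units and maximal ideal `𝔪` of size `m`. A
`(k+1)`-tuple of units summing to `0` is determined by its last `k` entries, which may be any
`k`-tuple of units with unit sum `x`; and a unit `a` makes `a + x` a non-unit only if `x` is a unit,
in which case `a` ranges over the `m` elements of `-x + 𝔪`. Hence `N_{k+2} + m N_{k+1} = u^{k+1}`
with `N_1 = 0`, which solves to `(u + m) N_{k+1} = u (u^k - (-m)^k)`.
-/

open Finset IsLocalRing SimpleGraph

theorem Nat.card_subtype_eq_sum_ite {α : Type*} [Fintype α] (p : α → Prop) [DecidablePred p] :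
    Nat.card {x // p x} = ∑ x, if p x then 1 else 0 := by
  rw [Nat.card_eq_fintype_card, Fintype.card_subtype, card_filter]

theorem Nat.card_subtype_add_card_subtype_not {α : Type*} [Finite α] (p : α → Prop) :
    Nat.card {x // p x} + Nat.card {x // ¬p x} = Nat.card α := by
  classical
  rw [← Nat.card_sum, Nat.card_congr (Equiv.sumCompl p)]

theorem Nat.card_fin_succ_subtype_eq_sum_head {β : Type*} [Fintype β] {k : ℕ}
    (P : β → (Fin k → β) → Prop) :
    Nat.card {f : Fin (k + 1) → β // P (f 0) (Fin.tail f)} = ∑ a, Nat.card {g // P a g} := by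
  rw [← Nat.card_sigma]
  exact Nat.card_congr
    (((Fin.consEquiv fun _ => β).symm.subtypeEquiv fun _ => Iff.rfl).trans
      (Equiv.subtypeProdEquivSigmaSubtype P))

theorem Nat.card_fin_succ_subtype_eq_sum_tail {β : Type*} [Fintype β] {k : ℕ}
    (P : β → (Fin k → β) → Prop) :
    Nat.card {f : Fin (k + 1) → β // P (f 0) (Fin.tail f)} = ∑ g, Nat.card {a // P a g} := by
  rw [← Nat.card_sigma]
  exact Nat.card_congr
    ((((Fin.consEquiv fun _ => β).symm.trans (Equiv.prodComm _ _)).subtypeEquiv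
      fun _ => Iff.rfl).trans (Equiv.subtypeProdEquivSigmaSubtype fun g a => P a g))

theorem Units.card_subtype_val_eq {M : Type*} [Monoid M] (y : M) [Decidable (IsUnit y)] :
    Nat.card {a : Mˣ // (a : M) = y} = if IsUnit y then 1 else 0 := by
  split_ifs with hy
  · have : Unique {a : Mˣ // (a : M) = y} :=
      ⟨⟨⟨hy.unit, hy.unit_spec⟩⟩,
        fun a => Subtype.ext (Units.ext (a.2.trans hy.unit_spec.symm))⟩
    exact Nat.card_unique
  · have : IsEmpty {a : Mˣ // (a : M) = y} := ⟨fun a => hy (a.2 ▸ a.1.isUnit)⟩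
    exact Nat.card_of_isEmpty

section UnitSums

variable (R : Type*) [CommRing R]

noncomputable def unitSumCount (k : ℕ) (c : R) : ℕ :=
  Nat.card {f : Fin k → Rˣ // ∑ j, (f j : R) = c}

variable {R}

theorem unitSumCount_zero [DecidableEq R] (c : R) :
    unitSumCount R 0 c = if c = 0 then 1 else 0 := by
  by_cases hc : c = 0 <;> simp [unitSumCount, hc, eq_comm]

theorem unitSumCount_pi {ι : Type*} [Fintype ι] {R : ι → Type*} [∀ i, CommRing (R i)]
    (k : ℕ) (c : ∀ i, R i) :
    unitSumCount (∀ i, R i) k c = ∏ i, unitSumCount (R i) k (c i) := by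
  unfold unitSumCount
  rw [← Nat.card_pi]
  let e : (Fin k → (∀ i, R i)ˣ) ≃ ∀ i, Fin k → (R i)ˣ :=
    ((Equiv.refl (Fin k)).arrowCongr MulEquiv.piUnits.toEquiv).trans (Equiv.piComm _)
  refine Nat.card_congr ((e.subtypeEquiv fun f => ?_).trans Equiv.subtypePiEquivPi)
  simp only [funext_iff, Finset.sum_apply]
  rfl

variable [Fintype R] [DecidableEq R]

theorem unitSumCount_succ (k : ℕ) (c : R) :
    unitSumCount R (k + 1) c = ∑ a : Rˣ, unitSumCount R k (c - a) := by
  simp_rw [unitSumCount, eq_sub_iff_add_eq']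
  rw [← Nat.card_fin_succ_subtype_eq_sum_head fun (a : Rˣ) g => (a : R) + ∑ j, (g j : R) = c]
  simp_rw [Fin.sum_univ_succ]
  rfl

theorem unitSumCount_succ_zero (k : ℕ) :
    unitSumCount R (k + 1) 0 = Nat.card {g : Fin k → Rˣ // IsUnit (∑ j, (g j : R))} := by
  classical
  simp_rw [unitSumCount, Fin.sum_univ_succ, ← eq_neg_iff_add_eq_zero]
  refine (Nat.card_fin_succ_subtype_eq_sum_tail
    fun (a : Rˣ) g => (a : R) = -∑ j, (g j : R)).trans ?_
  simp_rw [Units.card_subtype_val_eq, IsUnit.neg_iff, Nat.card_subtype_eq_sum_ite]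

end UnitSums

section UnitaryCayley

variable {R : Type*} [CommRing R] [Fintype R] [DecidableEq R] [Nontrivial R]

theorem unitaryCayley_adj_iff {x y : R} : (unitaryCayley R).Adj x y ↔ IsUnit (y - x) := by
  refine ⟨fun h => by simpa using h.2.neg, fun h => ⟨fun hxy => ?_, by simpa using h.neg⟩⟩
  exact not_isUnit_zero (by rwa [hxy, sub_self] at h)

theorem sum_neighborFinset_unitaryCayley {M : Type*} [AddCommMonoid M] (x : R) (F : R → M) :
    ∑ z ∈ (unitaryCayley R).neighborFinset x, F z = ∑ a : Rˣ, F (x + a) := by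
  refine (Finset.sum_nbij (fun a : Rˣ => x + a) ?_ ?_ ?_ fun _ _ => rfl).symm
  · intro a _
    simp [unitaryCayley_adj_iff]
  · intro a _ b _ hab
    exact Units.ext (add_left_cancel hab)
  · intro z hz
    obtain ⟨a, ha⟩ := unitaryCayley_adj_iff.mp ((mem_neighborFinset _ _ _).mp hz)
    exact ⟨a, mem_univ a, by simp [ha]⟩

theorem adjMatrix_unitaryCayley_pow_apply {α : Type*} [Semiring α] (k : ℕ) (x y : R) :
    (adjMatrix α (unitaryCayley R) ^ k) x y = unitSumCount R k (y - x) := by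
  induction k generalizing x with
  | zero => simp [Matrix.one_apply, unitSumCount_zero, sub_eq_zero, eq_comm]
  | succ k ih =>
    simp [pow_succ', ih, sum_neighborFinset_unitaryCayley, unitSumCount_succ, sub_add_eq_sub_sub]

theorem trace_adjMatrix_unitaryCayley_pow {α : Type*} [Semiring α] (k : ℕ) :
    (adjMatrix α (unitaryCayley R) ^ k).trace = Fintype.card R * unitSumCount R k 0 := by
  simp [Matrix.trace, adjMatrix_unitaryCayley_pow_apply]

end UnitaryCayley

theorem trace_adjMatrix_unitaryCayley_pi_pow {ι : Type*} [Fintype ι] [DecidableEq ι]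
    [Nonempty ι] {R : ι → Type*} [∀ i, CommRing (R i)] [∀ i, Fintype (R i)]
    [∀ i, DecidableEq (R i)] [∀ i, Nontrivial (R i)] {α : Type*} [CommSemiring α] (k : ℕ) :
    (adjMatrix α (unitaryCayley (∀ i, R i)) ^ k).trace =
      ∏ i, (adjMatrix α (unitaryCayley (R i)) ^ k).trace := by
  have := Pi.nontrivial_at (f := R) (Classical.arbitrary ι)
  simp_rw [trace_adjMatrix_unitaryCayley_pow, unitSumCount_pi, Fintype.card_pi, prod_mul_distrib]
  push_cast
  rfl

section LocalRing

variable {R : Type*} [CommRing R] [IsLocalRing R]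

theorem IsUnit.add_of_mem_maximalIdeal {a b : R} (ha : IsUnit a) (hb : b ∈ maximalIdeal R) :
    IsUnit (a + b) := by
  by_contra h
  have hab : a + b ∈ maximalIdeal R := (mem_maximalIdeal _).mpr h
  exact notMem_maximalIdeal.mpr ha (by simpa using sub_mem hab hb)

theorem card_units_add_mem_maximalIdeal (x : R) [Decidable (IsUnit x)] :
    Nat.card {a : Rˣ // (a : R) + x ∈ maximalIdeal R} =
      if IsUnit x then Nat.card (maximalIdeal R) else 0 := by
  split_ifs with hx
  · refine Nat.card_congr
      { toFun a := ⟨a.1 + x, a.2⟩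
        invFun y := ⟨(hx.neg.add_of_mem_maximalIdeal y.2).unit, by simp⟩
        left_inv a := by ext; simp
        right_inv y := by ext; simp }
  · have hx : x ∈ maximalIdeal R := (mem_maximalIdeal _).mpr hx
    have : IsEmpty {a : Rˣ // (a : R) + x ∈ maximalIdeal R} :=
      ⟨fun a => notMem_maximalIdeal.mpr (a.1.isUnit.add_of_mem_maximalIdeal hx) a.2⟩
    exact Nat.card_of_isEmpty

theorem card_units_add_card_maximalIdeal [Finite R] :
    Nat.card Rˣ + Nat.card (maximalIdeal R) = Nat.card R := by
  rw [Nat.card_congr Submonoid.unitsTypeEquivIsUnitSubmonoid.toEquiv,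
    Nat.card_congr (Equiv.subtypeEquivRight fun x => mem_maximalIdeal x)]
  exact Nat.card_subtype_add_card_subtype_not (· ∈ IsUnit.submonoid R)

variable [Fintype R] [DecidableEq R]

theorem unitSumCount_add_two_zero (k : ℕ) :
    unitSumCount R (k + 2) 0 + Nat.card (maximalIdeal R) * unitSumCount R (k + 1) 0 =
      Nat.card Rˣ ^ (k + 1) := by
  classical
  have split : Nat.card {g : Fin (k + 1) → Rˣ // IsUnit (∑ j, (g j : R))} =
      ∑ g : Fin k → Rˣ, Nat.card {a : Rˣ // IsUnit ((a : R) + ∑ j, (g j : R))} := by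
    simp_rw [Fin.sum_univ_succ]
    exact Nat.card_fin_succ_subtype_eq_sum_tail
      fun (a : Rˣ) g => IsUnit ((a : R) + ∑ j, (g j : R))
  have fibre (x : R) : Nat.card {a : Rˣ // IsUnit ((a : R) + x)} +
      (if IsUnit x then Nat.card (maximalIdeal R) else 0) = Nat.card Rˣ := by
    rw [← card_units_add_mem_maximalIdeal]
    exact Nat.card_subtype_add_card_subtype_not fun a : Rˣ => IsUnit ((a : R) + x)
  rw [unitSumCount_succ_zero, unitSumCount_succ_zero, split,
    Nat.card_subtype_eq_sum_ite fun g : Fin k → Rˣ => IsUnit (∑ j, (g j : R)),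
    mul_sum, ← sum_add_distrib]
  simp_rw [mul_ite, mul_one, mul_zero, fibre]
  rw [sum_const, card_univ, Fintype.card_fun, Fintype.card_fin, smul_eq_mul, pow_succ,
    Nat.card_eq_fintype_card]

theorem card_mul_unitSumCount_succ_zero (k : ℕ) :
    (Nat.card R * unitSumCount R (k + 1) 0 : ℤ) =
      Nat.card Rˣ * ((Nat.card Rˣ : ℤ) ^ k - (-(Nat.card (maximalIdeal R) : ℤ)) ^ k) := by
  rw [← card_units_add_card_maximalIdeal]
  induction k with
  | zero =>
    have : unitSumCount R 1 0 = 0 := by simp [unitSumCount_succ_zero]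
    simp [this]
  | succ k ih =>
    have := unitSumCount_add_two_zero (R := R) k
    zify at this
    push_cast at ih ⊢
    linear_combination (Nat.card Rˣ + Nat.card (maximalIdeal R) : ℤ) * this -
      (Nat.card (maximalIdeal R) : ℤ) * ih

theorem trace_adjMatrix_unitaryCayley_pow_succ {α : Type*} [Ring α] (k : ℕ) :
    (adjMatrix α (unitaryCayley R) ^ (k + 1)).trace =
      Nat.card Rˣ * ((Nat.card Rˣ : α) ^ k - (-(Nat.card (maximalIdeal R) : α)) ^ k) := by
  rw [trace_adjMatrix_unitaryCayley_pow, ← Nat.card_eq_fintype_card]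
  have h := congrArg (Int.cast : ℤ → α) (card_mul_unitSumCount_succ_zero (R := R) k)
  push_cast at h
  exact h

end LocalRing

/-- Let `R = R₁ × ⋯ × R_s` be a product of finite local rings, where `Rᵢ` has maximal
ideal of order `mᵢ`. Then for every `k ≥ 1`, the `k`-th spectral moment (trace of the
`k`-th power of the adjacency matrix) of `G_R` is
`|R^×| · Π_i (|Rᵢ^×|^(k-1) - (-mᵢ)^(k-1))`. -/
theorem stmt_18 (s : ℕ) (hs : 0 < s) (R : Fin s → Type*) [∀ i, CommRing (R i)]
    [∀ i, IsLocalRing (R i)] [∀ i, Fintype (R i)] [∀ i, DecidableEq (R i)]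
    (M : ∀ i, Ideal (R i)) (hM : ∀ i, (M i).IsMaximal)
    (m : Fin s → ℕ) (hm : ∀ i, m i = Nat.card (M i)) (k : ℕ) (hk : 1 ≤ k) :
    Matrix.trace ((SimpleGraph.adjMatrix ℝ (unitaryCayley (∀ i, R i))) ^ k) =
      (Nat.card (∀ i, R i)ˣ : ℝ) *
        ∏ i, ((Nat.card (R i)ˣ : ℝ) ^ (k - 1) - (-(m i : ℝ)) ^ (k - 1)) := by
  have : Nonempty (Fin s) := ⟨⟨0, hs⟩⟩
  obtain ⟨k, rfl⟩ := Nat.exists_eq_add_of_le' hk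
  rw [trace_adjMatrix_unitaryCayley_pi_pow, Nat.card_congr MulEquiv.piUnits.toEquiv, Nat.card_pi,
    Nat.cast_prod, ← prod_mul_distrib]
  refine prod_congr rfl fun i _ => ?_
  rw [hm i, eq_maximalIdeal (hM i), trace_adjMatrix_unitaryCayley_pow_succ, Nat.add_sub_cancel]
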